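/- arXiv:2209.14687 — 2 statements merged into one kernel-verified Lean document; each statement's English description precedes it below -/
import Mathlib

section
/- Let p(y|η) = p₀(y)·exp(ηᵀT(y) − φ(η)) be a family of probability densities on ℝᵈ belonging to the exponential family, with canonical parameter η ∈ ℝᵏ, sufficient statistic T : ℝᵈ → ℝᵏ differentiable, and a prior density p(η) on ℝᵏ. Define the marginal density p(y) = ∫ p(y|η) p(η) dη and, at a point y with p(y) > 0 and p₀(y) > 0, the posterior mean η̂(y) = (∫ η p(y|η) p(η) dη) / p(y). Assume p₀ is differentiable at y, the integrals defining p(y) and η̂(y) are finite, and differentiation under the integral sign is valid, i.e. ∇_y p(y) = ∫ ∇_y p(y|η) p(η) dη. Then Tweedie's formula holds: (∇_y T(y))ᵀ η̂(y) = ∇_y log p(y) − ∇_y log p₀(y). -/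
open MeasureTheory Real RealInnerProductSpace

/-!
Differentiating the likelihood in `y` gives
`∇_y p(y|η) = p(y|η) (∇ log p₀(y) + (∇T(y))ᵀ η)`. Integrating against the prior, the first
term contributes `p(y) ∇ log p₀(y)` and, by linearity of `(∇T(y))ᵀ`, the second contributes
`p(y) (∇T(y))ᵀ η̂(y)`; dividing by `p(y)` gives the formula.
-/

section GradientCalculus

open InnerProductSpace

variable {F : Type*} [NormedAddCommGroup F] [InnerProductSpace ℝ F] [CompleteSpace F]
  {f g : F → ℝ} {f' g' x : F}

theorem HasGradientAt.mul (hf : HasGradientAt f f' x) (hg : HasGradientAt g g' x) :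
    HasGradientAt (fun y => f y * g y) (f x • g' + g x • f') x := by
  rw [hasGradientAt_iff_hasFDerivAt] at *
  simpa using hf.fun_mul hg

theorem HasGradientAt.mul_const (hf : HasGradientAt f f' x) (c : ℝ) :
    HasGradientAt (fun y => f y * c) (c • f') x := by
  rw [hasGradientAt_iff_hasFDerivAt] at *
  simpa using hf.mul_const c

theorem HasGradientAt.sub_const (hf : HasGradientAt f f' x) (c : ℝ) :
    HasGradientAt (fun y => f y - c) f' x := by
  rw [hasGradientAt_iff_hasFDerivAt] at *
  exact hf.sub_const c

theorem HasGradientAt.exp (hf : HasGradientAt f f' x) :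
    HasGradientAt (fun y => Real.exp (f y)) (Real.exp (f x) • f') x := by
  rw [hasGradientAt_iff_hasFDerivAt] at *
  simpa using hf.exp

theorem HasGradientAt.log (hf : HasGradientAt f f' x) (hx : f x ≠ 0) :
    HasGradientAt (fun y => Real.log (f y)) ((f x)⁻¹ • f') x := by
  rw [hasGradientAt_iff_hasFDerivAt] at *
  simpa using hf.log hx

theorem HasFDerivAt.hasGradientAt_inner_left {E : Type*} [NormedAddCommGroup E]
    [InnerProductSpace ℝ E] [CompleteSpace E] {T : F → E} {T' : F →L[ℝ] E}
    (hT : HasFDerivAt T T' x) (v : E) :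
    HasGradientAt (fun y => ⟪v, T y⟫) (T'.adjoint v) x := by
  have hdual : toDual ℝ F (T'.adjoint v) = (innerSL ℝ v).comp T' := by
    ext u
    simp [T'.adjoint_inner_left]
  rw [hasGradientAt_iff_hasFDerivAt, hdual]
  exact (innerSL ℝ v).hasFDerivAt.comp x hT

end GradientCalculus

theorem hasGradientAt_mul_exp_inner_sub {F E : Type*} [NormedAddCommGroup F]
    [InnerProductSpace ℝ F] [CompleteSpace F] [NormedAddCommGroup E] [InnerProductSpace ℝ E]
    [CompleteSpace E] {p₀ : F → ℝ} {T : F → E} {g x : F} {T' : F →L[ℝ] E}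
    (hp₀ : HasGradientAt p₀ g x) (hT : HasFDerivAt T T' x) (η : E) (c : ℝ) :
    HasGradientAt (fun y => p₀ y * Real.exp (⟪η, T y⟫ - c))
      (Real.exp (⟪η, T x⟫ - c) • (g + p₀ x • T'.adjoint η)) x := by
  convert hp₀.mul ((hT.hasGradientAt_inner_left η).sub_const c).exp using 1
  module

theorem integral_mul_smul_add_smul_apply {α E F : Type*} [MeasurableSpace α] {μ : Measure α}
    [NormedAddCommGroup E] [NormedSpace ℝ E] [CompleteSpace E]
    [NormedAddCommGroup F] [NormedSpace ℝ F] [CompleteSpace F]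
    (A : E →L[ℝ] F) {w : α → ℝ} {v : α → E}
    (hw : Integrable w μ) (hwv : Integrable (fun a => w a • v a) μ) (c : ℝ) (g : F) :
    ∫ a, (w a * c) • g + w a • A (v a) ∂μ = ((∫ a, w a ∂μ) * c) • g + A (∫ a, w a • v a ∂μ) := by
  have hAwv : Integrable (fun a => w a • A (v a)) μ := by
    simpa using A.integrable_comp hwv
  rw [integral_add ((hw.mul_const c).smul_const g) hAwv, integral_smul_const, integral_mul_const,
    ← A.integral_comp_comm hwv]
  simp

/-- **Tweedie's formula for exponential families.**
Let `p(y|η) = p₀(y) · exp(⟪η, T y⟫ − φ η)` be an exponential-family density with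
canonical parameter `η ∈ ℝᵏ` and differentiable sufficient statistic `T : ℝᵈ → ℝᵏ`,
and let `prior` be a prior density on the parameter. Define the marginal
`p y = ∫ η, p(y|η) prior η` and the posterior mean
`η̂ = (∫ η, p(y|η) prior η • η) / p y`. Assuming `p y > 0`, `p₀ y > 0`, the relevant
integrals are finite, `p₀` is differentiable at `y`, and differentiation under the
integral sign is valid, we have
`(∇_y T(y))ᵀ η̂ = ∇_y log p(y) − ∇_y log p₀(y)`. -/
theorem tweedie_exponential_family
    {d k : ℕ}
    (p₀ : EuclideanSpace ℝ (Fin d) → ℝ)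
    (T : EuclideanSpace ℝ (Fin d) → EuclideanSpace ℝ (Fin k))
    (φ : EuclideanSpace ℝ (Fin k) → ℝ)
    (prior : EuclideanSpace ℝ (Fin k) → ℝ)
    (pcond : EuclideanSpace ℝ (Fin d) → EuclideanSpace ℝ (Fin k) → ℝ)
    (hpcond : ∀ y η, pcond y η = p₀ y * Real.exp ((inner ℝ η (T y) : ℝ) - φ η))
    (p : EuclideanSpace ℝ (Fin d) → ℝ)
    (hp : ∀ y, p y = ∫ η, pcond y η * prior η)
    (y : EuclideanSpace ℝ (Fin d))
    (ηhat : EuclideanSpace ℝ (Fin k))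
    (hηhat : ηhat = (p y)⁻¹ • ∫ η, (pcond y η * prior η) • η)
    (hT : Differentiable ℝ T)
    (hp₀diff : DifferentiableAt ℝ p₀ y)
    (hpy : 0 < p y) (hp₀y : 0 < p₀ y)
    (hint1 : Integrable (fun η => pcond y η * prior η))
    (hint2 : Integrable (fun η => (pcond y η * prior η) • η))
    (hDUI : HasGradientAt p (∫ η, gradient (fun y' => pcond y' η * prior η) y) y) :
    ContinuousLinearMap.adjoint (fderiv ℝ T y) ηhat
      = gradient (fun y' => Real.log (p y')) y
        - gradient (fun y' => Real.log (p₀ y')) y := by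
  set A := (fderiv ℝ T y).adjoint
  have hgrad_lik : ∀ η, gradient (fun y' => pcond y' η * prior η) y =
      (pcond y η * prior η * (p₀ y)⁻¹) • gradient p₀ y + (pcond y η * prior η) • A η := by
    intro η
    simp_rw [hpcond]
    rw [((hasGradientAt_mul_exp_inner_sub hp₀diff.hasGradientAt (hT y).hasFDerivAt η
      (φ η)).mul_const (prior η)).gradient]
    match_scalars <;> field_simp
  have hgrad_p : HasGradientAt p ((p y * (p₀ y)⁻¹) • gradient p₀ y +
      A (∫ η, (pcond y η * prior η) • η)) y := by
    simp_rw [hgrad_lik, integral_mul_smul_add_smul_apply A hint1 hint2, ← hp] at hDUI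
    exact hDUI
  rw [(hgrad_p.log hpy.ne').gradient, (hp₀diff.hasGradientAt.log hp₀y.ne').gradient, hηhat,
    map_smul, smul_add, smul_smul, inv_mul_cancel_left₀ hpy.ne', add_sub_cancel_left]
end

section
/- Fix y ∈ ℝⁿ and σ > 0, and let h_y : ℝⁿ → ℝ be the isotropic Gaussian likelihood density h_y(u) = (2πσ²)^{−n/2} exp(−‖y − u‖²/(2σ²)). Let A : ℝᵈ → ℝⁿ be continuously differentiable with M := sup_{x∈ℝᵈ} ‖∇_x A(x)‖ < ∞ (operator norm of the Jacobian), and let X be an integrable random vector on ℝᵈ with mean x̂ = E[X] and m₁ := E[‖X − x̂‖] < ∞. Then the Jensen gap of the map x ↦ h_y(A(x)) at X is bounded by |E[h_y(A(X))] − h_y(A(x̂))| ≤ (e^{−1/2} / (σ·(2πσ²)^{n/2})) · M · m₁. -/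
open MeasureTheory Real
open scoped NNReal

/-!
The map `x ↦ h_y(A x)` is Lipschitz with constant `L · M`. Here `M` bounds the Jacobian of `A`
(mean value theorem), and `L = e^{-1/2} / (σ (2πσ²)^{n/2})` is the Lipschitz constant of the
Gaussian density, because `|r| e^{-r²/2}`, the slope of the profile `e^{-r²/2}`, peaks at
`r = ±1`. For a `K`-Lipschitz `g`, `|E g(X) - g(x̂)| ≤ E |g(X) - g(x̂)| ≤ K · E ‖X - x̂‖`.
-/

theorem mul_exp_neg_sq_div_two_le (t : ℝ) : t * exp (-t ^ 2 / 2) ≤ exp (-1 / 2) := by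
  have ht : t ≤ exp (t - 1) := by linarith [add_one_le_exp (t - 1)]
  calc t * exp (-t ^ 2 / 2) ≤ exp (t - 1) * exp (-t ^ 2 / 2) := by gcongr
    _ = exp (-1 / 2 - (t - 1) ^ 2 / 2) := by rw [← exp_add]; ring_nf
    _ ≤ exp (-1 / 2) := exp_le_exp.2 (by nlinarith [sq_nonneg (t - 1)])

theorem lipschitzWith_exp_neg_sq_div_two :
    LipschitzWith (Real.toNNReal (exp (-1 / 2))) fun r : ℝ => exp (-r ^ 2 / 2) := by
  have hderiv (r : ℝ) : HasDerivAt (fun r : ℝ => exp (-r ^ 2 / 2)) (-r * exp (-r ^ 2 / 2)) r := by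
    convert ((hasDerivAt_pow 2 r).fun_neg.div_const 2).exp using 1
    push_cast
    ring
  refine lipschitzWith_of_nnnorm_deriv_le (fun r => (hderiv r).differentiableAt) fun r => ?_
  rw [(hderiv r).deriv]
  refine NNReal.le_toNNReal_of_coe_le ?_
  rw [coe_nnnorm, norm_mul, norm_neg, norm_eq_abs, norm_eq_abs, abs_exp, ← sq_abs]
  exact mul_exp_neg_sq_div_two_le |r|

theorem lipschitzWith_const_mul_exp_neg_norm_sub_sq {E : Type*} [SeminormedAddCommGroup E]
    (y : E) (c : ℝ) {σ : ℝ} (hσ : 0 < σ) :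
    LipschitzWith (Real.toNNReal (|c| * exp (-1 / 2) / σ))
      fun u => c * exp (-‖y - u‖ ^ 2 / (2 * σ ^ 2)) := by
  have hfun : (fun u => c * exp (-‖y - u‖ ^ 2 / (2 * σ ^ 2))) =
      (c • ·) ∘ (fun r => exp (-r ^ 2 / 2)) ∘ (σ⁻¹ • ·) ∘ dist y := by
    funext u
    simp only [Function.comp_apply, smul_eq_mul, dist_eq_norm]
    field_simp
  have hconst : Real.toNNReal (|c| * exp (-1 / 2) / σ) =
      ‖c‖₊ * (Real.toNNReal (exp (-1 / 2)) * (‖σ⁻¹‖₊ * 1)) := by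
    ext
    rw [Real.coe_toNNReal _ (by positivity)]
    simp [abs_of_pos hσ, (exp_pos _).le]
    ring
  rw [hfun, hconst]
  exact (lipschitzWith_smul c).comp <| lipschitzWith_exp_neg_sq_div_two.comp <|
    (lipschitzWith_smul σ⁻¹).comp (LipschitzWith.dist_right y)

theorem lipschitzWith_iSup_norm_fderiv {E F : Type*} [NormedAddCommGroup E] [NormedSpace ℝ E]
    [NormedAddCommGroup F] [NormedSpace ℝ F] {f : E → F} (hf : Differentiable ℝ f)
    (hbdd : BddAbove (Set.range fun x => ‖fderiv ℝ f x‖)) :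
    LipschitzWith (Real.toNNReal (⨆ x, ‖fderiv ℝ f x‖)) f :=
  lipschitzWith_of_nnnorm_fderiv_le hf fun x => NNReal.le_toNNReal_of_coe_le (le_ciSup hbdd x)

theorem LipschitzWith.abs_integral_comp_sub_le {Ω E : Type*} [MeasurableSpace Ω]
    {μ : Measure Ω} [IsProbabilityMeasure μ] [SeminormedAddCommGroup E] {g : E → ℝ} {K : ℝ≥0}
    (hg : LipschitzWith K g) {X : Ω → E} (hX : AEStronglyMeasurable X μ) (x₀ : E)
    (hm : Integrable (fun ω => ‖X ω - x₀‖) μ) :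
    |∫ ω, g (X ω) ∂μ - g x₀| ≤ K * ∫ ω, ‖X ω - x₀‖ ∂μ := by
  have hpointwise (ω : Ω) : |g (X ω) - g x₀| ≤ K * ‖X ω - x₀‖ := by
    simpa [dist_eq_norm] using hg.dist_le_mul (X ω) x₀
  have hgap : Integrable (fun ω => g (X ω) - g x₀) μ :=
    (hm.const_mul K).mono' ((hg.continuous.comp_aestronglyMeasurable hX).sub
      aestronglyMeasurable_const) (ae_of_all _ hpointwise)
  have hgX : Integrable (fun ω => g (X ω)) μ := by
    simpa [sub_eq_add_neg] using hgap
  calc |∫ ω, g (X ω) ∂μ - g x₀| = |∫ ω, (g (X ω) - g x₀) ∂μ| := by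
        rw [integral_sub hgX (integrable_const _), integral_const, probReal_univ, one_smul]
    _ ≤ ∫ ω, |g (X ω) - g x₀| ∂μ := abs_integral_le_integral_abs
    _ ≤ ∫ ω, K * ‖X ω - x₀‖ ∂μ := integral_mono hgap.abs (hm.const_mul K) hpointwise
    _ = K * ∫ ω, ‖X ω - x₀‖ ∂μ := integral_const_mul _ _

/-- **Jensen gap bound for diffusion posterior sampling (DPS, Theorem 1).**
Fix `y ∈ ℝⁿ` and `σ > 0`, and let `h_y(u) = (2πσ²)^{−n/2} exp(−‖y − u‖²/(2σ²))` be the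
Gaussian measurement likelihood. Let `A : ℝᵈ → ℝⁿ` be continuously differentiable with
bounded Jacobian `M = ⨆ x, ‖∇A(x)‖`, and let `X` be an integrable random vector with
mean `x̂ = E[X]` and `m₁ = E[‖X − x̂‖] < ∞`. Then
`|E[h_y(A(X))] − h_y(A(x̂))| ≤ (e^{−1/2}/(σ(2πσ²)^{n/2})) · M · m₁`. -/
theorem dps_jensen_gap_bound
    {d n : ℕ} {Ω : Type*} [MeasurableSpace Ω] (μ : Measure Ω) [IsProbabilityMeasure μ]
    (y : EuclideanSpace ℝ (Fin n)) (σ : ℝ) (hσ : 0 < σ)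
    (hY : EuclideanSpace ℝ (Fin n) → ℝ)
    (hhY : ∀ u, hY u = (2 * π * σ ^ 2) ^ (-(n : ℝ) / 2) *
      Real.exp (-‖y - u‖ ^ 2 / (2 * σ ^ 2)))
    (A : EuclideanSpace ℝ (Fin d) → EuclideanSpace ℝ (Fin n))
    (hA : ContDiff ℝ 1 A)
    (hAbdd : BddAbove (Set.range fun x => ‖fderiv ℝ A x‖))
    (X : Ω → EuclideanSpace ℝ (Fin d))
    (hX : Integrable X μ)
    (hm₁ : Integrable (fun ω => ‖X ω - ∫ ω', X ω' ∂μ‖) μ) :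
    |(∫ ω, hY (A (X ω)) ∂μ) - hY (A (∫ ω, X ω ∂μ))|
      ≤ (Real.exp (-(1 : ℝ) / 2) / (σ * (2 * π * σ ^ 2) ^ ((n : ℝ) / 2)))
        * (⨆ x, ‖fderiv ℝ A x‖)
        * ∫ ω, ‖X ω - ∫ ω', X ω' ∂μ‖ ∂μ := by
  have hlikelihood := lipschitzWith_const_mul_exp_neg_norm_sub_sq y
    ((2 * π * σ ^ 2) ^ (-(n : ℝ) / 2)) hσ
  rw [← funext hhY] at hlikelihood
  have hforward := lipschitzWith_iSup_norm_fderiv (hA.differentiable one_ne_zero) hAbdd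
  refine ((hlikelihood.comp hforward).abs_integral_comp_sub_le hX.aestronglyMeasurable _
    hm₁).trans_eq ?_
  congr 1
  have hM : 0 ≤ ⨆ x, ‖fderiv ℝ A x‖ := (norm_nonneg _).trans (le_ciSup hAbdd 0)
  have hπσ : 0 < 2 * π * σ ^ 2 := by positivity
  rw [NNReal.coe_mul, Real.coe_toNNReal _ hM, Real.coe_toNNReal _ (by positivity),
    abs_of_pos (rpow_pos_of_pos hπσ _), neg_div, rpow_neg hπσ.le]
  field_simp
end
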